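/- Let m ≥ 1 and let F be a finite set of strings over the alphabet Fin m, each of length at least 2; for each j ≥ 2 let a_j be the number of elements of F of length j, and for each k let s_k be the number of strings of length k over Fin m that avoid F. Then for every k ≥ 0 the inequality s_{k+1} ≥ m·s_k − ∑_{j=2}^{k+1} a_j · s_{k+1−j} holds (as integers). -/

import Mathlib

/-!
Prepend each of the `m` letters to each `F`-avoiding word of length `k`. The resulting
`m · s_k` words of length `k + 1` are distinct, and each of them either avoids `F`, or
contains a forbidden word only as a prefix (its tail avoids `F`). In the second case it
is `f ++ t` with `f ∈ F` of some length `j ∈ [2, k + 1]` and `t` an `F`-avoiding word of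
length `k + 1 - j`, and there are at most `a_j · s_{k+1-j}` such words for each `j`.
-/

open Finset

variable {α : Type*}

def Avoids (F : Finset (List α)) (w : List α) : Prop :=
  ∀ f ∈ F, ¬ f <:+: w

theorem Avoids.of_infix {F : Finset (List α)} {v w : List α} (hw : Avoids F w)
    (hvw : v <:+: w) : Avoids F v :=
  fun f hf hfv => hw f hf (hfv.trans hvw)

section Counting

variable [Fintype α] [DecidableEq α]

instance (F : Finset (List α)) : DecidablePred (Avoids F) :=
  fun w => inferInstanceAs (Decidable (∀ f ∈ F, ¬ f <:+: w))

def avoidingWords (F : Finset (List α)) (n : ℕ) : Finset (List α) :=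
  {w ∈ univ.image (List.ofFn (n := n)) | Avoids F w}

variable {F : Finset (List α)}

theorem mem_avoidingWords {n : ℕ} {w : List α} :
    w ∈ avoidingWords F n ↔ w.length = n ∧ Avoids F w := by
  simp only [avoidingWords, mem_filter, mem_image, mem_univ, true_and]
  constructor
  · rintro ⟨⟨v, rfl⟩, hv⟩
    exact ⟨List.length_ofFn, hv⟩
  · rintro ⟨rfl, hw⟩
    exact ⟨⟨w.get, List.ofFn_get w⟩, hw⟩

theorem natCard_avoiding_eq_card (F : Finset (List α)) (n : ℕ) :
    Nat.card {w : List α // w.length = n ∧ ∀ f ∈ F, ¬ f <:+: w} = #(avoidingWords F n) := by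
  rw [← Nat.card_eq_finsetCard]
  exact Nat.card_congr (Equiv.subtypeEquivRight fun _ => mem_avoidingWords.symm)

def forbiddenPrefixed (F : Finset (List α)) (n : ℕ) : Finset (List α) :=
  (Icc 2 n).biUnion fun j => image₂ (· ++ ·) {f ∈ F | f.length = j} (avoidingWords F (n - j))

theorem card_forbiddenPrefixed_le (n : ℕ) :
    #(forbiddenPrefixed F n) ≤
      ∑ j ∈ Icc 2 n, #{f ∈ F | f.length = j} * #(avoidingWords F (n - j)) :=
  card_biUnion_le.trans <| sum_le_sum fun _ _ => card_image₂_le _ _ _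

theorem cons_mem_avoidingWords_or_forbiddenPrefixed (hF : ∀ f ∈ F, 2 ≤ f.length) {k : ℕ}
    {w : List α} (hw : w ∈ avoidingWords F k) (a : α) :
    a :: w ∈ avoidingWords F (k + 1) ∪ forbiddenPrefixed F (k + 1) := by
  obtain ⟨hwk, hwF⟩ := mem_avoidingWords.mp hw
  by_cases hcons : Avoids F (a :: w)
  · exact mem_union_left _ (mem_avoidingWords.mpr ⟨by simp [hwk], hcons⟩)
  obtain ⟨f, hfF, hf⟩ : ∃ f ∈ F, f <:+: a :: w := by simpa [Avoids] using hcons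
  -- `w` avoids `F`, so the occurrence of `f` must start at the first letter
  obtain ⟨t, hft⟩ : f <+: a :: w := (List.infix_cons_iff.mp hf).resolve_right (hwF f hfF)
  have hf2 := hF f hfF
  have hlen : f.length + t.length = k + 1 := by simpa [hwk] using congrArg List.length hft
  have htw : t <:+ w := by
    refine (List.suffix_cons_iff.mp ⟨f, hft⟩).resolve_left fun h => ?_
    have := congrArg List.length h
    simp only [List.length_cons] at this
    omega
  refine mem_union_right _ (mem_biUnion.mpr ⟨f.length, ?_, mem_image₂.mpr ⟨f, ?_, t, ?_, hft⟩⟩)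
  · exact mem_Icc.mpr ⟨hf2, by omega⟩
  · exact mem_filter.mpr ⟨hfF, rfl⟩
  · exact mem_avoidingWords.mpr ⟨by omega, hwF.of_infix htw.isInfix⟩

theorem card_mul_card_avoidingWords_le (hF : ∀ f ∈ F, 2 ≤ f.length) (k : ℕ) :
    Fintype.card α * #(avoidingWords F k) ≤
      #(avoidingWords F (k + 1)) +
        ∑ j ∈ Icc 2 (k + 1), #{f ∈ F | f.length = j} * #(avoidingWords F (k + 1 - j)) := by
  have hcons_inj : Function.Injective fun p : α × List α => p.1 :: p.2 := by
    rintro ⟨a, v⟩ ⟨b, u⟩ h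
    simp_all
  calc Fintype.card α * #(avoidingWords F k)
      = #((univ ×ˢ avoidingWords F k).image fun p : α × List α => p.1 :: p.2) := by
        rw [card_image_of_injective _ hcons_inj, card_product, card_univ]
    _ ≤ #(avoidingWords F (k + 1) ∪ forbiddenPrefixed F (k + 1)) := by
        refine card_le_card (image_subset_iff.mpr fun p hp => ?_)
        exact cons_mem_avoidingWords_or_forbiddenPrefixed hF (mem_product.mp hp).2 p.1
    _ ≤ #(avoidingWords F (k + 1)) + #(forbiddenPrefixed F (k + 1)) := card_union_le _ _
    _ ≤ _ := Nat.add_le_add_left (card_forbiddenPrefixed_le _) _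

end Counting

theorem avoiding_count_recurrence_general (m : ℕ)
    (F : Finset (List (Fin m))) (hF : ∀ w ∈ F, 2 ≤ w.length) (k : ℕ) :
    (m : ℤ) * Nat.card {w : List (Fin m) // w.length = k ∧ ∀ f ∈ F, ¬ f <:+: w}
      - ∑ j ∈ Finset.Icc 2 (k + 1),
          ((F.filter (fun w => w.length = j)).card : ℤ) *
            Nat.card {w : List (Fin m) // w.length = k + 1 - j ∧ ∀ f ∈ F, ¬ f <:+: w}
      ≤ (Nat.card {w : List (Fin m) // w.length = k + 1 ∧ ∀ f ∈ F, ¬ f <:+: w} : ℤ) := by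
  have h := card_mul_card_avoidingWords_le hF k
  rw [Fintype.card_fin] at h
  simp only [natCard_avoiding_eq_card]
  rw [sub_le_iff_le_add]
  exact_mod_cast h

/-- If `s_k` is the number of strings of length `k` over `Fin m` avoiding the finite
forbidden set `F` (all forbidden strings of length ≥ 2) and `a_j` the number of
forbidden strings of length `j`, then
`s_{k+1} ≥ m·s_k − ∑_{j=2}^{k+1} a_j · s_{k+1−j}` as integers. -/
theorem avoiding_count_recurrence (m : ℕ) (hm : 1 ≤ m)
    (F : Finset (List (Fin m))) (hF : ∀ w ∈ F, 2 ≤ w.length) (k : ℕ) :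
    (m : ℤ) * Nat.card {w : List (Fin m) // w.length = k ∧ ∀ f ∈ F, ¬ f <:+: w}
      - ∑ j ∈ Finset.Icc 2 (k + 1),
          ((F.filter (fun w => w.length = j)).card : ℤ) *
            Nat.card {w : List (Fin m) // w.length = k + 1 - j ∧ ∀ f ∈ F, ¬ f <:+: w}
      ≤ (Nat.card {w : List (Fin m) // w.length = k + 1 ∧ ∀ f ∈ F, ¬ f <:+: w} : ℤ) :=
  avoiding_count_recurrence_general m F hF k
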